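/- arXiv:2006.10641 — 2 statements merged into one kernel-verified Lean document; each statement's English description precedes it below -/
import Mathlib

section
/- Let 𝒰 be a utility with zero diagonal. Define 𝒰min⁺ = min over pairs with 𝒰(i,j) ≥ 0 of 𝒰(i,j) and 𝒰min⁻ = min over pairs with 𝒰(i,j) < 0 of 𝒰(i,j), and 𝒰^min(i,j) = 𝒰min⁺ if 𝒰(i,j) ≥ 0, else 𝒰min⁻. Then for every n the sender graph of 𝒰^min on 𝒳ⁿ is a subgraph of the sender graph of 𝒰 on 𝒳ⁿ, and consequently Ξ(𝒰) ≤ Ξ(𝒰^min). -/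
open Finset Filter Real Topology

/-- Sender graph induced by utility `U` on `n`-length sequences: distinct `x, y`
are adjacent iff the total (equivalently, average) utility is nonnegative in one direction. -/
def senderGraph {X : Type*} (U : X → X → ℝ) (n : ℕ) : SimpleGraph (Fin n → X) where
  Adj x y := x ≠ y ∧ (0 ≤ ∑ k, U (y k) (x k) ∨ 0 ≤ ∑ k, U (x k) (y k))
  symm := ⟨fun x y h => ⟨h.1.symm, h.2.symm⟩⟩
  loopless := ⟨fun x h => h.1 rfl⟩

/-- Base sender graph on the alphabet itself. -/
def baseGraph {X : Type*} (U : X → X → ℝ) : SimpleGraph X where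
  Adj i j := i ≠ j ∧ (0 ≤ U i j ∨ 0 ≤ U j i)
  symm := ⟨fun i j h => ⟨h.1.symm, h.2.symm⟩⟩
  loopless := ⟨fun i h => h.1 rfl⟩

/-- `n`-fold strong product (strong power) of a graph. -/
def strongPow {V : Type*} (G : SimpleGraph V) (n : ℕ) : SimpleGraph (Fin n → V) where
  Adj x y := x ≠ y ∧ ∀ k, x k = y k ∨ G.Adj (x k) (y k)
  symm := ⟨fun x y h => ⟨h.1.symm, fun k => (h.2 k).imp Eq.symm SimpleGraph.Adj.symm⟩⟩
  loopless := ⟨fun x h => h.1 rfl⟩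

/-- Independence number of a graph: the largest size of a set of pairwise
non-adjacent vertices. -/
noncomputable def indepNum {V : Type*} (G : SimpleGraph V) : ℕ :=
  sSup {m | ∃ s : Finset V, s.card = m ∧ ∀ x ∈ s, ∀ y ∈ s, ¬ G.Adj x y}

/-- The sequence `n ↦ α(G_s^n)^{1/n}` whose limit is the information
extraction capacity `Ξ(U)`. -/
noncomputable def capSeq {X : Type*} (U : X → X → ℝ) (n : ℕ) : ℝ :=
  (indepNum (senderGraph U n) : ℝ) ^ (1 / (n : ℝ))

/-! Replacing each entry of `U` by the least entry of the same sign lowers the utility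
pointwise. Sender graphs are monotone in the utility and the independence number is antitone
in the graph, so every term of the capacity sequence can only grow. -/

section

variable {X : Type*}

lemma le_of_lowerBound_of_sign {U Umin : X → X → ℝ} {up um : ℝ}
    (hup : up ∈ lowerBounds {r | ∃ i j, U i j = r ∧ 0 ≤ r})
    (hum : um ∈ lowerBounds {r | ∃ i j, U i j = r ∧ r < 0})
    (hUmin : ∀ i j, Umin i j = if 0 ≤ U i j then up else um) (i j : X) :
    Umin i j ≤ U i j := by
  rw [hUmin i j]
  split_ifs with hsign
  · exact hup ⟨i, j, rfl, hsign⟩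
  · exact hum ⟨i, j, rfl, not_le.1 hsign⟩

lemma senderGraph_mono {U V : X → X → ℝ} (hUV : ∀ i j, U i j ≤ V i j) (n : ℕ) :
    senderGraph U n ≤ senderGraph V n := fun _ _ ⟨hne, hsum⟩ =>
  ⟨hne, hsum.imp (·.trans (sum_le_sum fun _ _ => hUV _ _))
    (·.trans (sum_le_sum fun _ _ => hUV _ _))⟩

lemma indepNum_anti {W : Type*} [Fintype W] {G H : SimpleGraph W} (hGH : G ≤ H) :
    indepNum H ≤ indepNum G := by
  refine csSup_le_csSup ⟨Fintype.card W, ?_⟩ ⟨0, ∅, by simp⟩ ?_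
  · rintro m ⟨s, rfl, -⟩
    exact card_le_univ s
  · rintro m ⟨s, hcard, hindep⟩
    exact ⟨s, hcard, fun x hx y hy hadj => hindep x hx y hy (hGH hadj)⟩

lemma capSeq_anti [Fintype X] {U V : X → X → ℝ} (hUV : ∀ i j, U i j ≤ V i j) (n : ℕ) :
    capSeq V n ≤ capSeq U n :=
  rpow_le_rpow (Nat.cast_nonneg _)
    (Nat.cast_le.2 (indepNum_anti (senderGraph_mono hUV n))) (by positivity)

end

theorem capacity_le_of_Umin_general {X : Type*} [Fintype X]
    (U : X → X → ℝ) (up um : ℝ)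
    (hup : IsLeast {r | ∃ i j, U i j = r ∧ 0 ≤ r} up)
    (hum : IsLeast {r | ∃ i j, U i j = r ∧ r < 0} um)
    (Umin : X → X → ℝ)
    (hUmin : ∀ i j, Umin i j = if 0 ≤ U i j then up else um) :
    (∀ n, senderGraph Umin n ≤ senderGraph U n) ∧
    ∀ L L' : ℝ, Filter.Tendsto (capSeq U) Filter.atTop (nhds L) →
      Filter.Tendsto (capSeq Umin) Filter.atTop (nhds L') → L ≤ L' := by
  have hle : ∀ i j, Umin i j ≤ U i j := le_of_lowerBound_of_sign hup.2 hum.2 hUmin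
  exact ⟨senderGraph_mono hle, fun L L' hL hL' =>
    le_of_tendsto_of_tendsto' hL hL' (capSeq_anti hle)⟩

/-- Capping the utility from below by `U^min` (taking the least nonnegative
value on nonnegative entries and the least negative value on negative entries)
makes every sender graph of `U^min` a subgraph of that of `U`, hence
`Ξ(U) ≤ Ξ(U^min)`. -/
theorem capacity_le_of_Umin {X : Type*} [Fintype X]
    (U : X → X → ℝ) (hdiag : ∀ i, U i i = 0) (up um : ℝ)
    (hup : IsLeast {r | ∃ i j, U i j = r ∧ 0 ≤ r} up)
    (hum : IsLeast {r | ∃ i j, U i j = r ∧ r < 0} um)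
    (Umin : X → X → ℝ)
    (hUmin : ∀ i j, Umin i j = if 0 ≤ U i j then up else um) :
    (∀ n, senderGraph Umin n ≤ senderGraph U n) ∧
    ∀ L L' : ℝ, Filter.Tendsto (capSeq U) Filter.atTop (nhds L) →
      Filter.Tendsto (capSeq Umin) Filter.atTop (nhds L') → L ≤ L' :=
  capacity_le_of_Umin_general U up um hup hum Umin hUmin
end

section
/- Let 𝒰 be a utility with zero diagonal and 𝒴 ⊆ 𝒳 a subset with the property: the subgraph on 𝒴 contains no positive-edges cycle (i.e., no sequence of distinct symbols i₀,…,i_{K−1} ∈ 𝒴 with 𝒰(i_{(m+1) mod K}, i_m) ≥ 0 for all m), and min_{i,j∈𝒴: 𝒰(i,j)<0} |𝒰(i,j)| > (|𝒴|−1) · max_{i,j∈𝒴: 𝒰(i,j)≥0} 𝒰(i,j). Then every sequence of distinct symbols i₀,…,i_{K−1} ∈ 𝒴 (K ≥ 2) satisfies 𝒰(i₁,i₀) + 𝒰(i₂,i₁) + ⋯ + 𝒰(i₀,i_{K−1}) < 0; i.e., 𝒴 is feasible for the permutation-matrix optimization, and hence Ξ(𝒰) ≥ |𝒴|. -/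
/-!
A closed chain of distinct symbols of `Y` has a negative edge, and by the magnitude condition
that edge outweighs the at most `|Y| - 1` other edges.

For the capacity, two distinct sequences over `Y` of the same type are never adjacent in the
sender graph: their joint type is a circulation supported on `Y`, which can be peeled into simple
cycles, each of negative weight. So each of the at most `(n + 1) ^ |X|` type classes of `Y ^ n`
is an independent set, and `α(G_n) ≥ |Y| ^ n / (n + 1) ^ |X|`.
-/

open Finset Filter Real Topology

open Function

theorem Set.MapsTo.exists_cycle {X : Type*} [Finite X] {f : X → X} {S : Set X}
    (hS : Set.MapsTo f S S) (hf : ∀ v ∈ S, f v ≠ v) {a : X} (ha : a ∈ S) :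
    ∃ (K : ℕ) (c : Fin (K + 2) → X),
      Injective c ∧ ∀ m, c m ∈ S ∧ c (m + 1) = f (c m) := by
  obtain ⟨i, j, hij, hfij⟩ := Finite.exists_ne_map_eq_of_infinite fun n : ℕ => f^[n] a
  have hper : ∀ i j, i < j → f^[i] a = f^[j] a → f^[i] a ∈ periodicPts f := fun i j hlt h =>
    ⟨j - i, Nat.sub_pos_of_lt hlt, by
      rw [IsPeriodicPt, IsFixedPt, ← iterate_add_apply, Nat.sub_add_cancel hlt.le, h]⟩
  obtain ⟨x, hxS, hx⟩ : ∃ x ∈ S, x ∈ periodicPts f := by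
    rcases hij.lt_or_gt with hlt | hlt
    · exact ⟨_, hS.iterate i ha, hper i j hlt hfij⟩
    · exact ⟨_, hS.iterate j ha, hper j i hlt hfij.symm⟩
  obtain ⟨K, hK⟩ : ∃ K, minimalPeriod f x = K + 2 := by
    have hpos := minimalPeriod_pos_of_mem_periodicPts hx
    have hne : minimalPeriod f x ≠ 1 := fun h =>
      hf x hxS (minimalPeriod_eq_one_iff_isFixedPt.mp h)
    exact ⟨minimalPeriod f x - 2, by omega⟩
  refine ⟨K, fun m => f^[m] x, fun m m' h => Fin.ext ?_, fun m => ⟨hS.iterate m hxS, ?_⟩⟩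
  · exact iterate_injOn_Iio_minimalPeriod (by simp [hK]) (by simp [hK]) h
  · change f^[(m + 1 : Fin (K + 2))] x = f (f^[m] x)
    rw [← iterate_succ_apply' f, ← iterate_mod_minimalPeriod_eq (n := m + 1), hK]
    simp [Fin.val_add]

section JointCount

variable {ι X : Type*} [Fintype ι] [DecidableEq X]

def jointCount (x y : ι → X) (u v : X) : ℕ := #{k | x k = u ∧ y k = v}

theorem sum_jointCount_nsmul [Fintype X] {M : Type*} [AddCommMonoid M] (x y : ι → X)
    (g : X → X → M) : ∑ u, ∑ v, jointCount x y u v • g u v = ∑ k, g (x k) (y k) := by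
  rw [← sum_fiberwise' univ (fun k => (x k, y k)) (fun p => g p.1 p.2),
    Fintype.sum_prod_type]
  simp [jointCount, sum_const]

theorem sum_jointCount_right [Fintype X] (x y : ι → X) (u : X) :
    ∑ v, jointCount x y u v = #{k | x k = u} := by
  rw [card_eq_sum_card_fiberwise (f := y) (t := univ) fun _ _ => mem_univ _]
  simp only [jointCount, filter_filter]

theorem sum_jointCount_left [Fintype X] (x y : ι → X) (v : X) :
    ∑ u, jointCount x y u v = #{k | y k = v} := by
  rw [card_eq_sum_card_fiberwise (f := x) (t := univ) fun _ _ => mem_univ _]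
  simp only [jointCount, filter_filter, and_comm]

theorem jointCount_cycle_le {K : ℕ} {c : Fin (K + 2) → X} {M : X → X → ℕ}
    (hinj : Injective c) (hc : ∀ m, M (c m) (c (m + 1)) ≠ 0) :
    (jointCount c fun m => c (m + 1)) ≤ M := by
  intro u v
  obtain hempty | ⟨m, hm⟩ :=
    (univ.filter fun k => c k = u ∧ c (k + 1) = v).eq_empty_or_nonempty
  · simp [jointCount, hempty]
  · rw [mem_filter] at hm
    have hle : jointCount c (fun m => c (m + 1)) u v ≤ 1 := card_le_one.mpr fun k hk k' hk' => by
      rw [mem_filter] at hk hk'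
      exact hinj (hk.2.1.trans hk'.2.1.symm)
    have hM := hc m
    rw [hm.2.1, hm.2.2] at hM
    exact hle.trans (Nat.one_le_iff_ne_zero.mpr hM)

end JointCount

section Circulation

variable {X : Type*} [Fintype X]

def IsCirculation (M : X → X → ℕ) : Prop := ∀ u, ∑ v, M u v = ∑ v, M v u

def flowWeight (U : X → X → ℝ) (M : X → X → ℕ) : ℝ := ∑ u, ∑ v, M u v • U v u

theorem flowWeight_add (U : X → X → ℝ) (M N : X → X → ℕ) :
    flowWeight U (M + N) = flowWeight U M + flowWeight U N := by
  simp only [flowWeight, Pi.add_apply, add_nsmul, sum_add_distrib]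

theorem IsCirculation.tsub {M N : X → X → ℕ} (hM : IsCirculation M) (hN : IsCirculation N)
    (hNM : N ≤ M) : IsCirculation (M - N) := by
  intro u
  simp only [Pi.sub_apply]
  rw [sum_tsub_distrib _ fun v _ => hNM u v, sum_tsub_distrib _ fun v _ => hNM v u, hM u, hN u]

theorem IsCirculation.exists_ne_apply_ne_zero {M : X → X → ℕ} (hM : IsCirculation M) {u v : X}
    (huv : u ≠ v) (h : M u v ≠ 0) : ∃ w ≠ v, M v w ≠ 0 := by
  by_contra! hout
  have hout_eq : ∑ w, M v w = M v v := sum_eq_single v (fun w _ hw => hout w hw) (by simp)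
  have hin_ge : M u v + M v v ≤ ∑ w, M w v :=
    add_le_sum (f := (M · v)) (fun _ _ => Nat.zero_le _) (mem_univ u) (mem_univ v) huv
  have := hM v
  omega

theorem IsCirculation.exists_cycle {M : X → X → ℕ} (hM : IsCirculation M) {a b : X}
    (hab : a ≠ b) (h : M a b ≠ 0) :
    ∃ (K : ℕ) (c : Fin (K + 2) → X), Injective c ∧ ∀ m, M (c m) (c (m + 1)) ≠ 0 := by
  choose! next hnext using fun v (h : ∃ w ≠ v, M v w ≠ 0) => h
  obtain ⟨K, c, hinj, hc⟩ := Set.MapsTo.exists_cycle (S := {v | ∃ w ≠ v, M v w ≠ 0})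
    (fun v hv => hM.exists_ne_apply_ne_zero (hnext v hv).1.symm (hnext v hv).2)
    (fun v hv => (hnext v hv).1) ⟨b, Ne.symm hab, h⟩
  exact ⟨K, c, hinj, fun m => (hc m).2 ▸ (hnext _ (hc m).1).2⟩

end Circulation

/-- Feasibility of `Y` for `𝒪(U)`, stated for the cycles of the non-identity permutations of `Y`
rather than for the permutation matrices themselves. -/
def IsFeasible {X : Type*} (U : X → X → ℝ) (Y : Finset X) : Prop :=
  ∀ K : ℕ, ∀ c : Fin (K + 2) → X, (∀ m, c m ∈ Y) → Injective c →
    ∑ m : Fin (K + 2), U (c (m + 1)) (c m) < 0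

section NegativeCycles

variable {X : Type*} [Fintype X] [DecidableEq X]

theorem isCirculation_jointCount {ι : Type*} [Fintype ι] {x y : ι → X}
    (h : ∀ s, #{k | x k = s} = #{k | y k = s}) : IsCirculation (jointCount x y) := fun u => by
  rw [sum_jointCount_right, sum_jointCount_left, h]

theorem flowWeight_jointCount {ι : Type*} [Fintype ι] (U : X → X → ℝ) (x y : ι → X) :
    flowWeight U (jointCount x y) = ∑ k, U (y k) (x k) :=
  sum_jointCount_nsmul x y fun u v => U v u

theorem isCirculation_jointCount_cycle {K : ℕ} (c : Fin (K + 2) → X) :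
    IsCirculation (jointCount c fun m => c (m + 1)) :=
  isCirculation_jointCount fun _ => (card_equiv (Equiv.addRight 1) fun _ => by simp).symm

variable {U : X → X → ℝ} {Y : Finset X}

theorem IsCirculation.exists_lt_flowWeight_lt
    (hfeas : IsFeasible U Y)
    {M : X → X → ℕ} (hM : IsCirculation M) (hY : ∀ u v, M u v ≠ 0 → u ∈ Y) {a b : X}
    (hab : a ≠ b) (h : M a b ≠ 0) :
    ∃ N < M, IsCirculation N ∧ flowWeight U M < flowWeight U N := by
  obtain ⟨K, c, hinj, hc⟩ := hM.exists_cycle hab h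
  set C := jointCount c fun m => c (m + 1)
  have hCM : C ≤ M := jointCount_cycle_le hinj hc
  have hC : C (c 0) (c (0 + 1)) ≠ 0 :=
    card_ne_zero_of_mem (mem_filter.mpr ⟨mem_univ 0, rfl, rfl⟩)
  refine ⟨M - C, lt_of_le_of_ne tsub_le_self fun hMC => hC ?_,
    hM.tsub (isCirculation_jointCount_cycle c) hCM, ?_⟩
  · have hsub : M (c 0) (c (0 + 1)) - C (c 0) (c (0 + 1)) = M (c 0) (c (0 + 1)) :=
      congr_fun₂ hMC _ _
    have : C (c 0) (c (0 + 1)) ≤ M (c 0) (c (0 + 1)) := hCM _ _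
    omega
  · have hfeasle : flowWeight U C < 0 := by
      rw [flowWeight_jointCount]
      exact hfeas K c (fun m => hY _ _ (hc m)) hinj
    rw [← tsub_add_cancel_of_le hCM, flowWeight_add, tsub_add_cancel_of_le hCM]
    linarith

theorem flowWeight_nonpos (hdiag : ∀ i, U i i = 0)
    (hfeas : IsFeasible U Y)
    (M : X → X → ℕ) (hM : IsCirculation M) (hY : ∀ u v, M u v ≠ 0 → u ∈ Y) :
    flowWeight U M ≤ 0 := by
  induction M using WellFoundedLT.induction with
  | _ M ih =>
    by_cases hoff : ∃ a b, a ≠ b ∧ M a b ≠ 0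
    · obtain ⟨a, b, hab, h⟩ := hoff
      obtain ⟨N, hNM, hN, hlt⟩ := hM.exists_lt_flowWeight_lt hfeas hY hab h
      refine hlt.le.trans (ih N hNM hN fun u v huv => hY u v ?_)
      have : N u v ≤ M u v := hNM.le u v
      omega
    · push Not at hoff
      refine (sum_eq_zero fun u _ => sum_eq_zero fun v _ => ?_).le
      by_cases huv : u = v
      · simp [huv, hdiag]
      · simp [hoff u v huv]

theorem flowWeight_neg (hdiag : ∀ i, U i i = 0)
    (hfeas : IsFeasible U Y)
    {M : X → X → ℕ} (hM : IsCirculation M) (hY : ∀ u v, M u v ≠ 0 → u ∈ Y) {a b : X}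
    (hab : a ≠ b) (h : M a b ≠ 0) : flowWeight U M < 0 := by
  obtain ⟨N, hNM, hN, hlt⟩ := hM.exists_lt_flowWeight_lt hfeas hY hab h
  refine hlt.trans_le (flowWeight_nonpos hdiag hfeas N hN fun u v huv => hY u v ?_)
  have : N u v ≤ M u v := hNM.le u v
  omega

theorem sum_lt_zero_of_card_filter_eq {ι : Type*} [Fintype ι] (hdiag : ∀ i, U i i = 0)
    (hfeas : IsFeasible U Y)
    {x y : ι → X} (hx : ∀ k, x k ∈ Y) (htype : ∀ s, #{k | x k = s} = #{k | y k = s})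
    (hxy : x ≠ y) : ∑ k, U (y k) (x k) < 0 := by
  obtain ⟨k, hk⟩ := ne_iff.mp hxy
  rw [← flowWeight_jointCount]
  refine flowWeight_neg hdiag hfeas (isCirculation_jointCount htype) (fun u v huv => ?_) hk
    (card_ne_zero_of_mem (mem_filter.mpr ⟨mem_univ k, rfl, rfl⟩))
  obtain ⟨k', hk'⟩ := card_ne_zero.mp huv
  exact (mem_filter.mp hk').2.1 ▸ hx k'

end NegativeCycles

theorem IsFeasible.of_magnitude {X : Type*} {U : X → X → ℝ} {Y : Finset X}
    (hnc : ∀ K : ℕ, ∀ i : Fin (K + 2) → X, (∀ m, i m ∈ Y) →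
      Injective i → ∃ m : Fin (K + 2), U (i (m + 1)) (i m) < 0)
    (hmag : ∀ i ∈ Y, ∀ j ∈ Y, U i j < 0 → ∀ i' ∈ Y, ∀ j' ∈ Y, 0 ≤ U i' j' →
      ((Y.card : ℝ) - 1) * U i' j' < |U i j|) :
    IsFeasible U Y := by
  classical
  intro K i hi hinj
  set e : Fin (K + 2) → ℝ := fun m => U (i (m + 1)) (i m)
  obtain ⟨m₀, hm₀⟩ := hnc K i hi hinj
  have hcard : (K : ℝ) + 2 ≤ #Y := by
    have := card_le_card_of_injOn (s := univ) i (fun m _ => hi m) hinj.injOn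
    rw [card_univ, Fintype.card_fin] at this
    exact_mod_cast this
  have hedge : ∀ m, ((K : ℝ) + 1) * e m < -e m₀ := by
    intro m
    rcases lt_or_ge (e m) 0 with hneg | hpos
    · nlinarith
    · have := hmag _ (hi _) _ (hi _) hm₀ _ (hi _) _ (hi _) hpos
      rw [abs_of_neg hm₀] at this
      nlinarith
  have hrest : ((K : ℝ) + 1) * ∑ m ∈ univ.erase m₀, e m < ((K : ℝ) + 1) * -e m₀ := by
    rw [mul_sum]
    calc ∑ m ∈ univ.erase m₀, ((K : ℝ) + 1) * e m < ∑ _m ∈ univ.erase m₀, -e m₀ :=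
          sum_lt_sum_of_nonempty (card_pos.mp (by simp)) fun m _ => hedge m
      _ = ((K : ℝ) + 1) * -e m₀ := by simp
  rw [← add_sum_erase _ _ (mem_univ m₀)]
  have := lt_of_mul_lt_mul_left hrest (by positivity)
  linarith

theorem card_le_indepNum {V : Type*} [Fintype V] (G : SimpleGraph V) (s : Finset V)
    (hs : ∀ x ∈ s, ∀ y ∈ s, ¬ G.Adj x y) : #s ≤ indepNum G :=
  le_csSup ⟨Fintype.card V, fun _ ⟨t, ht, _⟩ => ht ▸ card_le_univ t⟩ ⟨s, rfl, hs⟩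

theorem not_senderGraph_adj_of_card_filter_eq {X : Type*} [Fintype X] [DecidableEq X]
    {U : X → X → ℝ} (hdiag : ∀ i, U i i = 0) {Y : Finset X} (hfeas : IsFeasible U Y)
    {n : ℕ} {x y : Fin n → X} (hx : ∀ k, x k ∈ Y) (hy : ∀ k, y k ∈ Y)
    (htype : ∀ s, #{k | x k = s} = #{k | y k = s}) : ¬ (senderGraph U n).Adj x y := by
  rintro ⟨hxy, hyx | hxy'⟩
  · exact (sum_lt_zero_of_card_filter_eq hdiag hfeas hx htype hxy).not_ge hyx
  · exact (sum_lt_zero_of_card_filter_eq hdiag hfeas hy (fun s => (htype s).symm)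
      hxy.symm).not_ge hxy'

theorem card_pow_le_indepNum_mul {X : Type*} [Fintype X] [DecidableEq X] {U : X → X → ℝ}
    (hdiag : ∀ i, U i i = 0) {Y : Finset X} (hfeas : IsFeasible U Y) (n : ℕ) :
    #Y ^ n ≤ indepNum (senderGraph U n) * (n + 1) ^ Fintype.card X := by
  let typeOf : (Fin n → X) → X → ℕ := fun x s => #{k | x k = s}
  have hmaps : ∀ x ∈ Fintype.piFinset fun _ => Y,
      typeOf x ∈ Fintype.piFinset fun _ => range (n + 1) := fun x _ =>
    Fintype.mem_piFinset.mpr fun _ => mem_range_succ_iff.mpr (card_le_univ _ |>.trans_eq (by simp))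
  have hclass : ∀ t, #{x ∈ Fintype.piFinset (fun _ => Y) | typeOf x = t} ≤
      indepNum (senderGraph U n) := fun t => card_le_indepNum _ _ fun x hx y hy => by
    simp only [mem_filter, Fintype.mem_piFinset] at hx hy
    exact not_senderGraph_adj_of_card_filter_eq hdiag hfeas hx.1 hy.1
      (congr_fun (hx.2.trans hy.2.symm))
  simpa using card_le_mul_card_image_of_maps_to hmaps _ fun t _ => hclass t

theorem tendsto_succ_pow_rpow_one_div (d : ℕ) :
    Tendsto (fun n : ℕ => (((n : ℝ) + 1) ^ d) ^ (1 / (n : ℝ))) atTop (𝓝 1) := by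
  refine ((tendsto_rpow_div_mul_add d 1 (-1) one_ne_zero.symm).comp
    (tendsto_atTop_add_const_right _ 1 tendsto_natCast_atTop_atTop)).congr fun n => ?_
  rw [comp_apply, ← Real.rpow_natCast, ← Real.rpow_mul (by positivity)]
  congr 1
  ring

theorem le_of_pow_le_mul_succ_pow {A : ℕ → ℕ} {c d : ℕ}
    (h : ∀ n, c ^ n ≤ A n * (n + 1) ^ d) {L : ℝ}
    (hL : Tendsto (fun n => (A n : ℝ) ^ (1 / (n : ℝ))) atTop (𝓝 L)) : (c : ℝ) ≤ L := by
  have hlim := hL.mul (tendsto_succ_pow_rpow_one_div d)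
  rw [mul_one] at hlim
  refine ge_of_tendsto hlim (eventually_ne_atTop 0 |>.mono fun n hn => ?_)
  rw [← Real.mul_rpow (by positivity) (by positivity)]
  calc (c : ℝ) = ((c : ℝ) ^ n) ^ (1 / (n : ℝ)) := by
        rw [one_div, Real.pow_rpow_inv_natCast (by positivity) hn]
    _ ≤ ((A n : ℝ) * ((n : ℝ) + 1) ^ d) ^ (1 / (n : ℝ)) := by
        gcongr
        exact_mod_cast h n

/-- If `Y` contains no positive-edges cycle and the least magnitude of a
negative utility value on `Y` exceeds `(|Y|-1)` times the largest nonnegative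
utility value on `Y`, then every closed chain of distinct symbols of `Y` has
negative total weight (so `Y` is feasible for `𝒪(U)`), and `Ξ(U) ≥ |Y|`. -/
theorem capacity_ge_card_of_no_positive_cycle {X : Type*} [Fintype X]
    (U : X → X → ℝ) (hdiag : ∀ i, U i i = 0) (Y : Finset X)
    (hnc : ∀ K : ℕ, ∀ i : Fin (K + 2) → X, (∀ m, i m ∈ Y) →
      Function.Injective i → ∃ m : Fin (K + 2), U (i (m + 1)) (i m) < 0)
    (hmag : ∀ i ∈ Y, ∀ j ∈ Y, U i j < 0 → ∀ i' ∈ Y, ∀ j' ∈ Y, 0 ≤ U i' j' →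
      ((Y.card : ℝ) - 1) * U i' j' < |U i j|) :
    (∀ K : ℕ, ∀ i : Fin (K + 2) → X, (∀ m, i m ∈ Y) → Function.Injective i →
      ∑ m : Fin (K + 2), U (i (m + 1)) (i m) < 0) ∧
    ∀ L : ℝ, Filter.Tendsto (capSeq U) Filter.atTop (nhds L) → (Y.card : ℝ) ≤ L := by
  classical
  have hfeas := IsFeasible.of_magnitude hnc hmag
  exact ⟨hfeas, fun L hL => le_of_pow_le_mul_succ_pow (card_pow_le_indepNum_mul hdiag hfeas) hL⟩
end
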